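/- arXiv:1102.2073 — 4 statements merged into one kernel-verified Lean document; each statement's English description precedes it below -/
import Mathlib

section
/- Let F be a field and let R = F[a^{±1}, b^{±1}] be the Laurent polynomial ring in two variables over F (equivalently, the group algebra of ℤ² over F). Let C₂ and C₁ be free R-modules of finite rank, let d : C₂ → C₁ be an injective R-linear map, and let Z be an R-submodule of C₁ containing the image d(C₂). If Z ≠ d(C₂), then the quotient Z / d(C₂) is infinite-dimensional as a vector space over F. -/
/-- The Laurent polynomial ring `F[a^{±1}, b^{±1}]` in two variables, realised as the
group algebra of `ℤ²` over `F`. -/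
abbrev LaurentTwo (F : Type*) [Field F] : Type _ := AddMonoidAlgebra F (ℤ × ℤ)

namespace LT2Aux

open Finsupp

variable (F : Type*) [Field F]

/-- Currying equivalence `F[ℤ×ℤ] ≃ (F[ℤ])[ℤ]` (outer variable: second coordinate). -/
noncomputable def e : AddMonoidAlgebra F (ℤ × ℤ) ≃ₗ[F] AddMonoidAlgebra (AddMonoidAlgebra F ℤ) ℤ :=
  (AddMonoidAlgebra.coeffLinearEquiv F).trans ((Finsupp.domLCongr (Equiv.prodComm ℤ ℤ)).trans
    ((Finsupp.finsuppProdLEquiv F).trans ((Finsupp.mapRange.linearEquiv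
      (AddMonoidAlgebra.coeffLinearEquiv F).symm).trans (AddMonoidAlgebra.coeffLinearEquiv F).symm)))

variable {F}

lemma e_apply (s : AddMonoidAlgebra F (ℤ × ℤ)) (a b : ℤ) : ((e F s).coeff a).coeff b = s.coeff (b, a) := by
  simp [e, Finsupp.finsuppProdLEquiv, Finsupp.curryLinearEquiv_apply, Finsupp.curry_apply, Finsupp.domLCongr_apply, Finsupp.domCongr_apply,
    Finsupp.equivMapDomain_apply]

lemma e_single (x : ℤ × ℤ) (c : F) :
    e F (AddMonoidAlgebra.single x c) =
      AddMonoidAlgebra.single x.2 (AddMonoidAlgebra.single x.1 c) := by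
  classical
  ext a b
  rw [e_apply, AddMonoidAlgebra.coeff_single, AddMonoidAlgebra.coeff_single]
  rcases x with ⟨x1, x2⟩
  rw [Finsupp.single_apply, Finsupp.single_apply,
    apply_ite (fun (h : AddMonoidAlgebra F ℤ) => h.coeff b), AddMonoidAlgebra.coeff_single,
    Finsupp.single_apply, AddMonoidAlgebra.coeff_zero, Finsupp.zero_apply]
  by_cases h2 : x2 = a <;> by_cases h1 : x1 = b <;>
    simp [Prod.ext_iff, h1, h2]

lemma e_rep (r : AddMonoidAlgebra F (ℤ × ℤ)) :
    e F r = r.coeff.sum fun a c =>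
      AddMonoidAlgebra.single a.2 (AddMonoidAlgebra.single a.1 c) := by
  conv_lhs => rw [← AddMonoidAlgebra.sum_coeff_single r, map_finsuppSum]
  exact Finsupp.sum_congr fun a _ => e_single a (r.coeff a)

lemma e_mul (p q : AddMonoidAlgebra F (ℤ × ℤ)) : e F (p * q) = e F p * e F q := by
  classical
  rw [AddMonoidAlgebra.mul_def]
  rw [map_finsuppSum]
  rw [e_rep p, e_rep q, Finsupp.sum_mul]
  refine Finsupp.sum_congr fun a₁ _ => ?_
  rw [map_finsuppSum, Finsupp.mul_sum]
  refine Finsupp.sum_congr fun a₂ _ => ?_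
  rw [e_single, AddMonoidAlgebra.single_mul_single, AddMonoidAlgebra.single_mul_single]
  rfl

/-- Key lemma over the coefficient ring `A`: if `G` has all nonzero coefficients units
and `G * S` is divisible by the "constant" `single 0 f'`, then every coefficient of `S`
is divisible by `f'`. -/
lemma key2 {A : Type*} [CommRing A] (f' : A) (G S T : AddMonoidAlgebra A ℤ)
    (hGu : ∀ n : ℤ, G.coeff n ≠ 0 → IsUnit (G.coeff n)) (hG : G ≠ 0)
    (heq : G * S = AddMonoidAlgebra.single 0 f' * T) :
    ∀ n, f' ∣ S.coeff n := by
  classical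
  set I : Ideal A := Ideal.span {f'} with hI
  set π : A →ₗ[A] A ⧸ I := I.mkQ with hπ
  have hπ0 : ∀ x : A, f' ∣ x → π x = 0 := by
    intro x hx
    rw [hπ, Submodule.mkQ_apply, Submodule.Quotient.mk_eq_zero, hI]
    exact Ideal.mem_span_singleton.2 hx
  by_contra hcon
  push_neg at hcon
  obtain ⟨n₀, hn₀⟩ := hcon
  set D : Finset ℤ := S.coeff.support.filter (fun n => ¬ f' ∣ S.coeff n) with hD
  have hDne : D.Nonempty := by
    refine ⟨n₀, Finset.mem_filter.2 ⟨Finsupp.mem_support_iff.2 ?_, hn₀⟩⟩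
    intro h0; exact hn₀ (h0 ▸ dvd_zero f')
  set k : ℤ := D.max' hDne with hk
  have hkD : k ∈ D := D.max'_mem hDne
  have hkS : k ∈ S.coeff.support := (Finset.mem_filter.1 hkD).1
  have hkdvd : ¬ f' ∣ S.coeff k := (Finset.mem_filter.1 hkD).2
  have hGne : G.coeff.support.Nonempty := Finsupp.support_nonempty_iff.2 (by simpa using hG)
  set m : ℤ := G.coeff.support.max' hGne with hm
  have hmG : m ∈ G.coeff.support := G.coeff.support.max'_mem hGne
  have hhigh : ∀ j ∈ S.coeff.support, k < j → π (S.coeff j) = 0 := by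
    intro j hj hkj
    by_contra hne
    have hjD : j ∈ D := Finset.mem_filter.2 ⟨hj, fun hdvd => hne (hπ0 _ hdvd)⟩
    exact absurd (D.le_max' j hjD) (not_le.2 hkj)
  have h1 : π ((G * S).coeff (m + k)) = G.coeff m • π (S.coeff k) := by
    rw [AddMonoidAlgebra.coeff_mul]
    rw [Finsupp.sum]
    rw [map_sum]
    rw [Finset.sum_eq_single m]
    · rw [Finsupp.sum, map_sum, Finset.sum_eq_single k]
      · rw [if_pos rfl, ← smul_eq_mul, map_smul]
      · intro j _ hjk
        rw [if_neg (fun h => hjk (by omega)), map_zero]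
      · intro hk'
        exact absurd hkS hk'
    · intro i hi him
      rw [Finsupp.sum, map_sum]
      apply Finset.sum_eq_zero
      intro j hj
      by_cases hij : i + j = m + k
      · rw [if_pos hij, ← smul_eq_mul, map_smul]
        have hilt : i < m := lt_of_le_of_ne (G.coeff.support.le_max' i hi) him
        have : π (S.coeff j) = 0 := hhigh j hj (by omega)
        rw [this, smul_zero]
      · rw [if_neg hij, map_zero]
    · intro hm'
      exact absurd hmG hm'
  have h2 : π ((AddMonoidAlgebra.single 0 f' * T : AddMonoidAlgebra A ℤ).coeff (m + k)) = 0 := by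
    rw [AddMonoidAlgebra.coeff_single_zero_mul]
    exact hπ0 _ (dvd_mul_right f' _)
  rw [heq, h2] at h1
  have hGm : IsUnit (G.coeff m) := hGu m (Finsupp.mem_support_iff.1 hmG)
  have : π (S.coeff k) = 0 := by
    rw [← hGm.smul_eq_zero]
    exact h1.symm
  exact hkdvd (Ideal.mem_span_singleton.1 (by
    rw [hπ, Submodule.mkQ_apply, Submodule.Quotient.mk_eq_zero] at this
    exact this))

lemma key3 {A : Type*} [CommRing A] (f' : A) (S : AddMonoidAlgebra A ℤ)
    (h : ∀ n, f' ∣ S.coeff n) : (AddMonoidAlgebra.single 0 f' : AddMonoidAlgebra A ℤ) ∣ S := by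
  classical
  choose q hq using h
  refine ⟨S.coeff.support.sum (fun n => AddMonoidAlgebra.single n (q n)), ?_⟩
  rw [Finset.mul_sum]
  have : ∀ n ∈ S.coeff.support,
      (AddMonoidAlgebra.single 0 f' : AddMonoidAlgebra A ℤ) * AddMonoidAlgebra.single n (q n)
        = AddMonoidAlgebra.single n (S.coeff n) := by
    intro n _
    rw [AddMonoidAlgebra.single_mul_single, zero_add, ← hq n]
  rw [Finset.sum_congr rfl this]
  exact (AddMonoidAlgebra.sum_coeff_single S).symm

/-- The main divisibility lemma in `F[ℤ×ℤ]`. -/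
lemma key (f g s t : AddMonoidAlgebra F (ℤ × ℤ)) (hf0 : f ≠ 0)
    (hfs : ∀ x ∈ f.coeff.support, x.2 = 0) (hg0 : g ≠ 0) (hgs : ∀ x ∈ g.coeff.support, x.1 = 0)
    (heq : g * s = f * t) : f ∣ s := by
  classical
  set f' : AddMonoidAlgebra F ℤ := (e F f).coeff 0 with hf'
  have hf : e F f = AddMonoidAlgebra.single 0 f' := by
    ext a b
    by_cases ha : a = 0
    · subst ha
      show ((e F f).coeff 0).coeff b = ((Finsupp.single (0:ℤ) f') 0).coeff b
      rw [Finsupp.single_eq_same]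
    · show ((e F f).coeff a).coeff b = ((Finsupp.single (0:ℤ) f') a).coeff b
      rw [Finsupp.single_eq_of_ne' (fun h => ha h.symm), e_apply, AddMonoidAlgebra.coeff_zero,
        Finsupp.zero_apply]
      by_contra hne
      exact ha (hfs (b, a) (Finsupp.mem_support_iff.2 hne))
  have hGform : ∀ n : ℤ, (e F g).coeff n = AddMonoidAlgebra.single 0 (((e F g).coeff n).coeff 0) := by
    intro n
    ext b
    by_cases hb : b = 0
    · subst hb; rw [AddMonoidAlgebra.coeff_single, Finsupp.single_eq_same]
    · rw [AddMonoidAlgebra.coeff_single, Finsupp.single_eq_of_ne' (fun h => hb h.symm), e_apply]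
      by_contra hne
      exact hb (hgs (b, n) (Finsupp.mem_support_iff.2 hne))
  have hGu : ∀ n : ℤ, (e F g).coeff n ≠ 0 → IsUnit ((e F g).coeff n) := by
    intro n hn
    set c : F := ((e F g).coeff n).coeff 0 with hc
    have hcne : c ≠ 0 := by
      intro h0
      apply hn
      rw [hGform n, ← hc, h0]
      exact AddMonoidAlgebra.single_zero 0
    refine IsUnit.of_mul_eq_one (AddMonoidAlgebra.single 0 c⁻¹) ?_
    rw [hGform n, ← hc, AddMonoidAlgebra.single_mul_single, add_zero, mul_inv_cancel₀ hcne]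
    rfl
  have hgE : e F g ≠ 0 := fun h => hg0 ((e F).map_eq_zero_iff.1 h)
  have heq' : e F g * e F s = AddMonoidAlgebra.single 0 f' * e F t := by
    rw [← hf, ← e_mul, ← e_mul, heq]
  have hdvd := key2 f' (e F g) (e F s) (e F t) hGu hgE heq'
  obtain ⟨Y, hY⟩ := key3 f' (e F s) hdvd
  refine ⟨(e F).symm Y, (e F).injective ?_⟩
  rw [e_mul, hY, hf, LinearEquiv.apply_symm_apply]

/-- Producing a nonzero annihilating "polynomial" supported on the range of `φ`. -/
lemma helper {N : Type*} [AddCommMonoid N] [Module (AddMonoidAlgebra F (ℤ × ℤ)) N]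
    [Module F N] [IsScalarTower F (AddMonoidAlgebra F (ℤ × ℤ)) N]
    (φ : ℕ → ℤ × ℤ) (hφ : Function.Injective φ) (zb : N) (c : ℕ →₀ F) (hc : c ≠ 0)
    (hrel : Finsupp.linearCombination F
      (fun n => (AddMonoidAlgebra.single (φ n) (1:F) : AddMonoidAlgebra F (ℤ × ℤ)) • zb) c = 0) :
    ∃ f : AddMonoidAlgebra F (ℤ × ℤ), f ≠ 0 ∧ (∀ x ∈ f.coeff.support, x ∈ Set.range φ)
      ∧ f • zb = 0 := by
  classical
  refine ⟨c.sum fun n a => AddMonoidAlgebra.single (φ n) a, ?_, ?_, ?_⟩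
  · have hmap : (c.sum fun n a => AddMonoidAlgebra.single (φ n) a)
        = AddMonoidAlgebra.ofCoeff (Finsupp.embDomain ⟨φ, hφ⟩ c) := by
      rw [Finsupp.embDomain_eq_mapDomain, Finsupp.mapDomain, AddMonoidAlgebra.ofCoeff_finsuppSum]
      rfl
    rw [hmap]
    intro h0
    exact hc (Finsupp.embDomain_eq_zero.1 (AddMonoidAlgebra.ofCoeff_eq_zero.1 h0))
  · intro x hx
    have hmap : (c.sum fun n a => AddMonoidAlgebra.single (φ n) a)
        = AddMonoidAlgebra.ofCoeff (Finsupp.mapDomain φ c) := by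
      rw [Finsupp.mapDomain, AddMonoidAlgebra.ofCoeff_finsuppSum]
      rfl
    rw [hmap] at hx
    obtain ⟨n, _, hn⟩ := Finset.mem_image.1 (Finsupp.mapDomain_support hx)
    exact ⟨n, hn⟩
  · rw [Finsupp.sum, Finset.sum_smul]
    rw [Finsupp.linearCombination_apply, Finsupp.sum] at hrel
    rw [← hrel]
    refine Finset.sum_congr rfl fun n _ => ?_
    have : (AddMonoidAlgebra.single (φ n) (c n) : AddMonoidAlgebra F (ℤ × ℤ))
        = c n • AddMonoidAlgebra.single (φ n) (1:F) := by
      rw [AddMonoidAlgebra.smul_single, smul_eq_mul, mul_one]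
    rw [this, smul_assoc]

end LT2Aux

/-- **Lemma 2 (algebraic form)**: over `R = F[a^{±1}, b^{±1}]`, if `d : C₂ → C₁` is an
injective `R`-linear map between finite free `R`-modules and `Z` is an `R`-submodule of
`C₁` with `d(C₂) ≤ Z` and `Z ≠ d(C₂)`, then `Z / d(C₂)` is infinite-dimensional over `F`. -/
theorem laurent_quotient_infinite_dimensional
    (F : Type*) [Field F]
    (C₂ C₁ : Type*) [AddCommGroup C₂] [AddCommGroup C₁]
    [Module (LaurentTwo F) C₂] [Module (LaurentTwo F) C₁]
    [Module.Free (LaurentTwo F) C₂] [Module.Finite (LaurentTwo F) C₂]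
    [Module.Free (LaurentTwo F) C₁] [Module.Finite (LaurentTwo F) C₁]
    (d : C₂ →ₗ[LaurentTwo F] C₁) (hd : Function.Injective d)
    (Z : Submodule (LaurentTwo F) C₁)
    (hZ : LinearMap.range d ≤ Z) (hne : Z ≠ LinearMap.range d) :
    ¬ Module.Finite F
      (RestrictScalars F (LaurentTwo F)
        (↥Z ⧸ Submodule.comap Z.subtype (LinearMap.range d))) := by
  classical
  intro hfin
  set R := LaurentTwo F with hR
  set P : Submodule R ↥Z := Submodule.comap Z.subtype (LinearMap.range d) with hP
  set M' := (↥Z ⧸ P) with hM'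
  letI : Module R (RestrictScalars F R M') := RestrictScalars.moduleOrig F R M'
  haveI : IsScalarTower F R (RestrictScalars F R M') := RestrictScalars.isScalarTower F R M'
  obtain ⟨z, hzZ, hz⟩ := SetLike.exists_of_lt (lt_of_le_of_ne hZ (Ne.symm hne))
  set zq : M' := Submodule.Quotient.mk ⟨z, hzZ⟩ with hzq
  set zb : RestrictScalars F R M' := zq with hzb
  -- annihilators in each variable
  have main : ∀ φ : ℕ → ℤ × ℤ, Function.Injective φ →
      ∃ f : R, f ≠ 0 ∧ (∀ x ∈ f.coeff.support, x ∈ Set.range φ) ∧ f • zb = 0 := by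
    intro φ hφ
    have hnli : ¬ LinearIndependent F
        (fun n => (AddMonoidAlgebra.single (φ n) (1:F) : R) • zb) :=
      Module.Finite.not_linearIndependent_of_infinite _
    rw [LinearIndependent, injective_iff_map_eq_zero] at hnli
    push_neg at hnli
    obtain ⟨c, hc0, hc⟩ := hnli
    exact LT2Aux.helper φ hφ zb c hc hc0
  have hφa : Function.Injective (fun n : ℕ => ((n : ℤ), (0 : ℤ))) := by
    intro a b h
    simpa using h
  have hφb : Function.Injective (fun n : ℕ => ((0 : ℤ), (n : ℤ))) := by
    intro a b h
    simpa using h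
  obtain ⟨f, hf0, hfs, hfz⟩ := main _ hφa
  obtain ⟨g, hg0, hgs, hgz⟩ := main _ hφb
  have hfs' : ∀ x ∈ f.coeff.support, x.2 = 0 := by
    intro x hx; obtain ⟨n, hn⟩ := hfs x hx; rw [← hn]
  have hgs' : ∀ x ∈ g.coeff.support, x.1 = 0 := by
    intro x hx; obtain ⟨n, hn⟩ := hgs x hx; rw [← hn]
  -- translate the annihilation into membership in the image of d
  have hmem : ∀ r : R, r • zb = 0 → ∃ u : C₂, d u = r • z := by
    intro r hr
    have hq : r • (Submodule.Quotient.mk ⟨z, hzZ⟩ : M') = 0 := hr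
    rw [← Submodule.Quotient.mk_smul, Submodule.Quotient.mk_eq_zero] at hq
    obtain ⟨u, hu⟩ := Submodule.mem_comap.1 hq
    exact ⟨u, hu⟩
  obtain ⟨u, hu⟩ := hmem f hfz
  obtain ⟨v, hv⟩ := hmem g hgz
  have huv : g • u = f • v := by
    apply hd
    rw [map_smul, map_smul, hu, hv, smul_smul, smul_smul, mul_comm]
  -- coordinates w.r.t. a basis of C₂
  let bC := Module.Free.chooseBasis R C₂
  have hcoord : ∀ i, g * (bC.repr u i) = f * (bC.repr v i) := by
    intro i
    have h := congrArg (fun w => bC.repr w i) huv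
    simpa [map_smul, Finsupp.smul_apply, smul_eq_mul] using h
  have hdvd : ∀ i, f ∣ bC.repr u i := fun i =>
    LT2Aux.key f g (bC.repr u i) (bC.repr v i) hf0 hfs' hg0 hgs' (hcoord i)
  choose q hq using hdvd
  set W : Module.Free.ChooseBasisIndex R C₂ →₀ R := Finsupp.equivFunOnFinite.symm q with hW
  have hu2 : u = f • bC.repr.symm W := by
    apply bC.repr.injective
    rw [map_smul, LinearEquiv.apply_symm_apply]
    ext i
    rw [Finsupp.smul_apply, smul_eq_mul, hW]
    rw [hq i]
    rfl
  have hzd : f • z = f • d (bC.repr.symm W) := by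
    rw [← hu, hu2, map_smul]
  have hfz' : z = d (bC.repr.symm W) := by
    have := smul_right_injective C₁ hf0 hzd
    exact this
  exact hz ⟨_, hfz'.symm⟩
end

section
/- The additive group M (the ℤ-span of the set of midpoints of edges of the regular icosahedron) is isomorphic, as an abelian group, to ℤ⁶. -/
noncomputable section

/-- The golden ratio `(1+√5)/2`. -/
def gold : ℝ := (1 + Real.sqrt 5) / 2

/-- A point of `ℝ³` (with the Euclidean norm) from its three coordinates. -/
def pt (x y z : ℝ) : EuclideanSpace ℝ (Fin 3) := (WithLp.equiv 2 (Fin 3 → ℝ)).symm ![x, y, z]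

/-- The vertices `(0, ±1, ±φ), (±1, ±φ, 0), (±φ, 0, ±1)` of the regular icosahedron. -/
def icoVerts : Set (EuclideanSpace ℝ (Fin 3)) :=
  {w | ∃ s t : ℝ, (s = 1 ∨ s = -1) ∧ (t = 1 ∨ t = -1) ∧
    (w = pt 0 s (t * gold) ∨ w = pt s (t * gold) 0 ∨ w = pt (t * gold) 0 s)}

/-- The set `E` of midpoints of edges of the icosahedron: the edges are the pairs of
vertices at distance 2. -/
def icoMid : Set (EuclideanSpace ℝ (Fin 3)) :=
  {e | ∃ u ∈ icoVerts, ∃ v ∈ icoVerts, ‖u - v‖ = 2 ∧ e = (2⁻¹ : ℝ) • (u + v)}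

/-- `M`, the ℤ-span of the set of edge midpoints of the icosahedron. -/
def icoM : AddSubgroup (EuclideanSpace ℝ (Fin 3)) := AddSubgroup.closure icoMid


lemma gold_sq' : gold ^ 2 = gold + 1 := by
  have h5 : Real.sqrt 5 ^ 2 = 5 := Real.sq_sqrt (by norm_num)
  unfold gold; nlinarith [h5]

lemma gold_irr : Irrational gold := by
  have := (Nat.Prime.irrational_sqrt (p := 5) (by norm_num))
  unfold gold
  have h := ((this.ratCast_add 1).ratCast_mul (q := 1/2) (by norm_num))
  convert h using 1; push_cast; ring

lemma pt_apply (a b c : ℝ) (i : Fin 3) : pt a b c i = ![a,b,c] i := rfl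

lemma pt_add (a b c d e f : ℝ) : pt a b c + pt d e f = pt (a+d) (b+e) (c+f) := by
  ext i; fin_cases i <;> simp [pt_apply]

lemma pt_smul (r a b c : ℝ) : r • pt a b c = pt (r*a) (r*b) (r*c) := by
  ext i; fin_cases i <;> simp [pt_apply]

lemma pt_sub (a b c d e f : ℝ) : pt a b c - pt d e f = pt (a-d) (b-e) (c-f) := by
  ext i; fin_cases i <;> simp [pt_apply]

lemma pt_zero : pt 0 0 0 = 0 := by
  ext i; fin_cases i <;> simp [pt_apply]

lemma norm_pt_eq_two {a b c : ℝ} (h : a^2+b^2+c^2 = 4) : ‖pt a b c‖ = 2 := by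
  rw [EuclideanSpace.norm_eq]
  rw [show (2:ℝ) = Real.sqrt 4 by rw [show (4:ℝ) = 2^2 by norm_num, Real.sqrt_sq]; norm_num]
  congr 1
  rw [Fin.sum_univ_three]
  simp only [pt_apply, Real.norm_eq_abs, sq_abs]
  simpa using h


lemma int_gold_zero {m n : ℤ} (h : (m:ℝ) + n * gold = 0) : m = 0 ∧ n = 0 := by
  rcases eq_or_ne n 0 with hn | hn
  · subst hn; norm_num at h
    exact ⟨by exact_mod_cast h, rfl⟩
  · exfalso
    apply gold_irr
    refine ⟨(-m : ℚ)/(n : ℚ), ?_⟩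
    have hn' : (n:ℝ) ≠ 0 := Int.cast_ne_zero.mpr hn
    push_cast
    field_simp
    linarith

def icoV : Fin 6 → EuclideanSpace ℝ (Fin 3) :=
  ![pt 1 0 0, pt 0 1 0, pt 0 0 1, pt gold 0 0, pt 0 gold 0, pt 0 0 gold]


lemma icoV_li : LinearIndependent ℤ icoV := by
  rw [Fintype.linearIndependent_iff]
  intro g hg
  have hsm : ∀ (k : ℤ) (a b c : ℝ), k • pt a b c = pt (k*a) (k*b) (k*c) := by
    intro k a b c
    rw [← Int.cast_smul_eq_zsmul ℝ, pt_smul]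
  rw [Fin.sum_univ_six] at hg
  simp only [show icoV 0 = pt 1 0 0 from rfl, show icoV 1 = pt 0 1 0 from rfl,
    show icoV 2 = pt 0 0 1 from rfl, show icoV 3 = pt gold 0 0 from rfl,
    show icoV 4 = pt 0 gold 0 from rfl, show icoV 5 = pt 0 0 gold from rfl] at hg
  rw [hsm, hsm, hsm, hsm, hsm, hsm, pt_add, pt_add, pt_add, pt_add, pt_add, ← pt_zero] at hg
  have h0 : ∀ i : Fin 3, ∀ a b c : ℝ, pt a b c = pt 0 0 0 → ![a,b,c] i = 0 := by
    intro i a b c h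
    have := congrArg (fun x : EuclideanSpace ℝ (Fin 3) => x i) h
    simp only [pt_apply] at this
    rw [this]
    fin_cases i <;> norm_num
  have e1 := h0 0 _ _ _ hg
  have e2 := h0 1 _ _ _ hg
  have e3 := h0 2 _ _ _ hg
  simp only [Matrix.cons_val_zero, Matrix.cons_val_one, Matrix.head_cons, Matrix.cons_val_two,
    Matrix.tail_cons] at e1 e2 e3
  have p1 := int_gold_zero (m := g 0) (n := g 3) (by push_cast; linarith)
  have p2 := int_gold_zero (m := g 1) (n := g 4) (by push_cast; linarith)
  have p3 := int_gold_zero (m := g 2) (n := g 5) (by push_cast; linarith)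
  intro i; fin_cases i <;> simp [p1.1, p1.2, p2.1, p2.2, p3.1, p3.2]

def icoW : Fin 6 → EuclideanSpace ℝ (Fin 3) := fun i => (2⁻¹:ℝ) • icoV i

lemma icoW_li : LinearIndependent ℤ icoW := by
  have := icoV_li.map'
    ((LinearEquiv.smulOfNeZero ℝ _ (2⁻¹:ℝ) (by norm_num)).restrictScalars ℤ).toLinearMap
    (LinearEquiv.ker _)
  convert this using 1
  · rfl
  · rfl

open Submodule

lemma sign_smul_mem {L : Submodule ℤ (EuclideanSpace ℝ (Fin 3))} {x : EuclideanSpace ℝ (Fin 3)}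
    (hx : x ∈ L) {s : ℝ} (hs : s = 1 ∨ s = -1) : s • x ∈ L := by
  rcases hs with rfl | rfl
  · simpa using hx
  · rw [show (-1:ℝ) • x = -x by simp]
    exact neg_mem hx

lemma mid_le_spanW : span ℤ icoMid ≤ span ℤ (Set.range icoW) := by
  have hmem : ∀ i : Fin 6, icoW i ∈ span ℤ (Set.range icoW) :=
    fun i => subset_span ⟨i, rfl⟩
  have hvert : ∀ x ∈ icoVerts, (2⁻¹:ℝ) • x ∈ span ℤ (Set.range icoW) := by
    rintro x ⟨s, t, hs, ht, rfl | rfl | rfl⟩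
    · rw [show (2⁻¹:ℝ) • pt 0 s (t*gold) = s • icoW 1 + t • icoW 5 from by
        simp only [icoW, show icoV 1 = pt 0 1 0 from rfl, show icoV 5 = pt 0 0 gold from rfl,
          pt_smul, pt_add]
        congr 1 <;> ring]
      exact add_mem (sign_smul_mem (hmem 1) hs) (sign_smul_mem (hmem 5) ht)
    · rw [show (2⁻¹:ℝ) • pt s (t*gold) 0 = s • icoW 0 + t • icoW 4 from by
        simp only [icoW, show icoV 0 = pt 1 0 0 from rfl, show icoV 4 = pt 0 gold 0 from rfl,
          pt_smul, pt_add]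
        congr 1 <;> ring]
      exact add_mem (sign_smul_mem (hmem 0) hs) (sign_smul_mem (hmem 4) ht)
    · rw [show (2⁻¹:ℝ) • pt (t*gold) 0 s = s • icoW 2 + t • icoW 3 from by
        simp only [icoW, show icoV 2 = pt 0 0 1 from rfl, show icoV 3 = pt gold 0 0 from rfl,
          pt_smul, pt_add]
        congr 1 <;> ring]
      exact add_mem (sign_smul_mem (hmem 2) hs) (sign_smul_mem (hmem 3) ht)
  apply span_le.mpr
  rintro e ⟨u, hu, v, hv, -, rfl⟩
  rw [smul_add]
  exact add_mem (hvert u hu) (hvert v hv)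

lemma spanV_le_mid : span ℤ (Set.range icoV) ≤ span ℤ icoMid := by
  have hA : pt 0 1 gold ∈ icoVerts := ⟨1, 1, Or.inl rfl, Or.inl rfl, Or.inl (by rw [one_mul])⟩
  have hA' : pt 0 (-1) gold ∈ icoVerts :=
    ⟨-1, 1, Or.inr rfl, Or.inl rfl, Or.inl (by rw [one_mul])⟩
  have hB : pt 1 gold 0 ∈ icoVerts := ⟨1, 1, Or.inl rfl, Or.inl rfl, Or.inr (Or.inl (by rw [one_mul]))⟩
  have hB' : pt (-1) gold 0 ∈ icoVerts :=
    ⟨-1, 1, Or.inr rfl, Or.inl rfl, Or.inr (Or.inl (by rw [one_mul]))⟩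
  have hC : pt gold 0 1 ∈ icoVerts :=
    ⟨1, 1, Or.inl rfl, Or.inl rfl, Or.inr (Or.inr (by rw [one_mul]))⟩
  have hC' : pt gold 0 (-1) ∈ icoVerts :=
    ⟨-1, 1, Or.inr rfl, Or.inl rfl, Or.inr (Or.inr (by rw [one_mul]))⟩
  have memMid : ∀ a b c d e f : ℝ, pt a b c ∈ icoVerts → pt d e f ∈ icoVerts →
      (a-d)^2+(b-e)^2+(c-f)^2 = 4 →
      (2⁻¹:ℝ) • (pt a b c + pt d e f) ∈ span ℤ icoMid := by
    intro a b c d e f h1 h2 h3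
    exact subset_span ⟨_, h1, _, h2, by rw [pt_sub]; exact norm_pt_eq_two h3, rfl⟩
  have hg := gold_sq'
  have m1 := memMid 0 1 gold 1 gold 0 hA hB (by nlinarith [hg])
  have m2 := memMid 0 1 gold (-1) gold 0 hA hB' (by nlinarith [hg])
  have m3 := memMid gold 0 1 0 1 gold hC hA (by nlinarith [hg])
  have m4 := memMid gold 0 1 0 (-1) gold hC hA' (by nlinarith [hg])
  have m5 := memMid 1 gold 0 gold 0 1 hB hC (by nlinarith [hg])
  have m6 := memMid 1 gold 0 gold 0 (-1) hB hC' (by nlinarith [hg])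
  have m7 := memMid gold 0 1 gold 0 (-1) hC hC' (by nlinarith [hg])
  have m8 := memMid 1 gold 0 (-1) gold 0 hB hB' (by nlinarith [hg])
  have m9 := memMid 0 1 gold 0 (-1) gold hA hA' (by nlinarith [hg])
  apply span_le.mpr
  rintro x ⟨i, rfl⟩
  fin_cases i
  · show icoV 0 ∈ span ℤ icoMid
    rw [show icoV 0 = (2⁻¹:ℝ) • (pt 0 1 gold + pt 1 gold 0)
        - (2⁻¹:ℝ) • (pt 0 1 gold + pt (-1) gold 0) from by
      simp only [show icoV 0 = pt 1 0 0 from rfl, pt_add, pt_smul, pt_sub]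
      congr 1 <;> ring]
    exact sub_mem m1 m2
  · show icoV 1 ∈ span ℤ icoMid
    rw [show icoV 1 = (2⁻¹:ℝ) • (pt gold 0 1 + pt 0 1 gold)
        - (2⁻¹:ℝ) • (pt gold 0 1 + pt 0 (-1) gold) from by
      simp only [show icoV 1 = pt 0 1 0 from rfl, pt_add, pt_smul, pt_sub]
      congr 1 <;> ring]
    exact sub_mem m3 m4
  · show icoV 2 ∈ span ℤ icoMid
    rw [show icoV 2 = (2⁻¹:ℝ) • (pt 1 gold 0 + pt gold 0 1)
        - (2⁻¹:ℝ) • (pt 1 gold 0 + pt gold 0 (-1)) from by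
      simp only [show icoV 2 = pt 0 0 1 from rfl, pt_add, pt_smul, pt_sub]
      congr 1 <;> ring]
    exact sub_mem m5 m6
  · show icoV 3 ∈ span ℤ icoMid
    rw [show icoV 3 = (2⁻¹:ℝ) • (pt gold 0 1 + pt gold 0 (-1)) from by
      simp only [show icoV 3 = pt gold 0 0 from rfl, pt_add, pt_smul]
      congr 1 <;> ring]
    exact m7
  · show icoV 4 ∈ span ℤ icoMid
    rw [show icoV 4 = (2⁻¹:ℝ) • (pt 1 gold 0 + pt (-1) gold 0) from by
      simp only [show icoV 4 = pt 0 gold 0 from rfl, pt_add, pt_smul]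
      congr 1 <;> ring]
    exact m8
  · show icoV 5 ∈ span ℤ icoMid
    rw [show icoV 5 = (2⁻¹:ℝ) • (pt 0 1 gold + pt 0 (-1) gold) from by
      simp only [show icoV 5 = pt 0 0 gold from rfl, pt_add, pt_smul]
      congr 1 <;> ring]
    exact m9


/-- **Lemma 3(1)**: `M ≅ ℤ⁶` as an abelian group. -/
theorem icoM_equiv_zpow6 : Nonempty (icoM ≃+ (Fin 6 → ℤ)) := by
  obtain ⟨n, bN⟩ := Submodule.basisOfPidOfLE mid_le_spanW (Module.Basis.span icoW_li)
  have hrank : Module.rank ℤ (span ℤ icoMid) = n := by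
    rw [rank_eq_card_basis bN]; simp
  have hle : (6 : Cardinal) ≤ n := by
    have h1 : Module.rank ℤ (span ℤ (Set.range icoV)) = 6 := by
      rw [rank_eq_card_basis (Module.Basis.span icoV_li)]; simp
    calc (6 : Cardinal) = Module.rank ℤ (span ℤ (Set.range icoV)) := h1.symm
      _ ≤ Module.rank ℤ (span ℤ icoMid) := Submodule.rank_mono spanV_le_mid
      _ = n := hrank
  have hge : (n : Cardinal) ≤ 6 := by
    have h1 : Module.rank ℤ (span ℤ (Set.range icoW)) = 6 := by
      rw [rank_eq_card_basis (Module.Basis.span icoW_li)]; simp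
    calc (n : Cardinal) = Module.rank ℤ (span ℤ icoMid) := hrank.symm
      _ ≤ Module.rank ℤ (span ℤ (Set.range icoW)) := Submodule.rank_mono mid_le_spanW
      _ = 6 := h1
  have hn : n = 6 :=
    le_antisymm (by exact_mod_cast hge) (by exact_mod_cast hle)
  have e1 : (span ℤ icoMid) ≃ₗ[ℤ] (Fin 6 → ℤ) := (bN.reindex (finCongr hn)).equivFun
  rw [show icoM = (span ℤ icoMid).toAddSubgroup from
    (Submodule.span_int_eq_addSubgroupClosure icoMid).symm]
  exact ⟨e1.toAddEquiv⟩

end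
end

section
/- Let a, c : ℝ³ → ℝ³ be the linear maps a = diag(1, −1, −1) and c = diag(−1, −1, 1), which preserve the set E of edge midpoints and the subgroup M, and let (1−c)M = {m − c(m) : m ∈ M}, an additive subgroup of M. Then for every m ∈ M, the image of m + a(m) in the quotient group M / (1−c)M is a torsion element; that is, 2·(m + a(m)) ∈ (1−c)M. (Equivalently: the action induced by a on the quotient of M/(1−c)M by its torsion subgroup is multiplication by −1.) -/
noncomputable section

/-- The isometry `a = diag(1, −1, −1)` of `ℝ³` as a linear map. -/
def aLin : EuclideanSpace ℝ (Fin 3) →ₗ[ℝ] EuclideanSpace ℝ (Fin 3) :=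
  (WithLp.linearEquiv 2 ℝ (Fin 3 → ℝ)).symm.toLinearMap ∘ₗ
    (Matrix.diagonal ![(1 : ℝ), -1, -1]).mulVecLin ∘ₗ
      (WithLp.linearEquiv 2 ℝ (Fin 3 → ℝ)).toLinearMap

/-- The isometry `c = diag(−1, −1, 1)` of `ℝ³`, rotation by `π` about the third axis,
as a linear map. -/
def cLin : EuclideanSpace ℝ (Fin 3) →ₗ[ℝ] EuclideanSpace ℝ (Fin 3) :=
  (WithLp.linearEquiv 2 ℝ (Fin 3 → ℝ)).symm.toLinearMap ∘ₗ
    (Matrix.diagonal ![(-1 : ℝ), -1, 1]).mulVecLin ∘ₗ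
      (WithLp.linearEquiv 2 ℝ (Fin 3 → ℝ)).toLinearMap

/-- The subgroup `(1 − c)M = {m − c(m) : m ∈ M}` of `M`. -/
def oneSubC_M : AddSubgroup (EuclideanSpace ℝ (Fin 3)) :=
  AddSubgroup.map (LinearMap.id - cLin).toAddMonoidHom icoM


lemma aLin_apply' (v : EuclideanSpace ℝ (Fin 3)) (i : Fin 3) :
    aLin v i = ![(1:ℝ),-1,-1] i * v i := by
  show (Matrix.diagonal ![(1:ℝ),-1,-1]).mulVec v i = _
  rw [Matrix.mulVec_diagonal]

lemma cLin_apply' (v : EuclideanSpace ℝ (Fin 3)) (i : Fin 3) :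
    cLin v i = ![(-1:ℝ),-1,1] i * v i := by
  show (Matrix.diagonal ![(-1:ℝ),-1,1]).mulVec v i = _
  rw [Matrix.mulVec_diagonal]

lemma pt_apply' (x y z : ℝ) (i : Fin 3) : pt x y z i = ![x,y,z] i := rfl

lemma aLin_pt (x y z : ℝ) : aLin (pt x y z) = pt x (-y) (-z) := by
  ext i
  rw [aLin_apply', pt_apply', pt_apply']
  fin_cases i <;> simp

lemma norm_aLin (v : EuclideanSpace ℝ (Fin 3)) : ‖aLin v‖ = ‖v‖ := by
  rw [EuclideanSpace.norm_eq, EuclideanSpace.norm_eq]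
  congr 1
  apply Finset.sum_congr rfl
  intro i _
  rw [aLin_apply']
  fin_cases i <;> simp

lemma key_identity (v : EuclideanSpace ℝ (Fin 3)) :
    (v + aLin v) - cLin (v + aLin v) = 2 • (v + aLin v) := by
  ext i
  have h1 : ((v + aLin v) - cLin (v + aLin v)) i
      = (v + aLin v) i - cLin (v + aLin v) i := rfl
  have h2 : ((2:ℕ) • (v + aLin v)) i = 2 * (v + aLin v) i := by
    rw [two_smul]; show (v + aLin v) i + (v + aLin v) i = _; ring
  rw [h1, h2, cLin_apply']
  have h3 : (v + aLin v) i = v i + aLin v i := rfl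
  rw [h3, aLin_apply']
  fin_cases i <;> simp <;> ring

lemma aLin_verts {u : EuclideanSpace ℝ (Fin 3)} (hu : u ∈ icoVerts) : aLin u ∈ icoVerts := by
  obtain ⟨s, t, hs, ht, hw⟩ := hu
  rcases hw with h | h | h
  · exact ⟨-s, -t, by rcases hs with rfl|rfl <;> norm_num,
      by rcases ht with rfl|rfl <;> norm_num, Or.inl (by rw [h, aLin_pt]; ring_nf)⟩
  · exact ⟨s, -t, hs, by rcases ht with rfl|rfl <;> norm_num,
      Or.inr (Or.inl (by rw [h, aLin_pt]; ring_nf))⟩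
  · exact ⟨-s, t, by rcases hs with rfl|rfl <;> norm_num, ht,
      Or.inr (Or.inr (by rw [h, aLin_pt]; ring_nf))⟩

lemma aLin_mid {e : EuclideanSpace ℝ (Fin 3)} (he : e ∈ icoMid) : aLin e ∈ icoMid := by
  obtain ⟨u, hu, v, hv, hd, he⟩ := he
  refine ⟨aLin u, aLin_verts hu, aLin v, aLin_verts hv, ?_, ?_⟩
  · rw [← map_sub, norm_aLin, hd]
  · rw [he, map_smul, map_add]

lemma aLin_icoM {m : EuclideanSpace ℝ (Fin 3)} (hm : m ∈ icoM) : aLin m ∈ icoM := by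
  induction hm using AddSubgroup.closure_induction with
  | mem x hx => exact AddSubgroup.subset_closure (aLin_mid hx)
  | zero => rw [map_zero]; exact zero_mem _
  | add x y _ _ hx hy => rw [map_add]; exact add_mem hx hy
  | neg x _ hx => rw [map_neg]; exact neg_mem hx

/-- **Lemma 3(3)**: for every `m ∈ M`, the image of `m + a(m)` in `M/(1−c)M` is a
torsion element, i.e. `2(m + a(m)) ∈ (1−c)M`; equivalently, `a` acts on the quotient
of `M/(1−c)M` by its torsion subgroup as multiplication by `−1`. -/
theorem icoM_a_acts_by_neg_one_mod_torsion :
    ∀ m ∈ icoM, 2 • (m + aLin m) ∈ oneSubC_M := by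
  intro m hm
  refine ⟨m + aLin m, add_mem hm (aLin_icoM hm), ?_⟩
  have h : (LinearMap.id - cLin).toAddMonoidHom (m + aLin m)
      = (m + aLin m) - cLin (m + aLin m) := by
    simp [LinearMap.sub_apply]
  rw [h, key_identity]


end
end

section
/- Let X, Y ∈ SL(2,ℂ) with tr(X) = 1 and tr(Y) = (1+√5)/2, and suppose that the subgroup of PSL(2,ℂ) generated by the images of X and Y is isomorphic to the alternating group A₅. Then tr(XY) ∈ {0, 1, (1+√5)/2, (−1+√5)/2}. -/
open Matrix

/-- `PSL(2,ℂ)`: the quotient of `SL(2,ℂ)` by its centre `{±I}`. -/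
abbrev PSL2C : Type :=
  SpecialLinearGroup (Fin 2) ℂ ⧸ Subgroup.center (SpecialLinearGroup (Fin 2) ℂ)

set_option maxRecDepth 40000 in
lemma a5_orders : ∀ g : alternatingGroup (Fin 5), g^2 = 1 ∨ g^3 = 1 ∨ g^5 = 1 := by decide

lemma ch2 (A : Matrix (Fin 2) (Fin 2) ℂ) (hd : A.det = 1) :
    A * A = A.trace • A - 1 := by
  have h := hd
  rw [Matrix.det_fin_two] at h
  apply Matrix.ext
  simp only [Fin.forall_fin_two, Matrix.mul_apply, Fin.sum_univ_two, Matrix.trace_fin_two,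
    Matrix.smul_apply, Matrix.sub_apply, Matrix.one_apply, smul_eq_mul]
  norm_num
  refine ⟨⟨by linear_combination (-1:ℂ) * h, by ring⟩, by ring, by linear_combination (-1:ℂ)*h⟩

lemma scalar_aux (A : Matrix (Fin 2) (Fin 2) ℂ) (hd : A.det = 1)
    (h1 : A ≠ 1) (h2 : A ≠ -1) (c d : ℂ) (h : c • A = d • (1 : Matrix (Fin 2) (Fin 2) ℂ)) :
    c = 0 ∧ d = 0 := by
  by_cases hc : c = 0
  · subst hc
    refine ⟨rfl, ?_⟩
    have := congrArg (fun m : Matrix (Fin 2) (Fin 2) ℂ => m 0 0) h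
    simpa [Matrix.one_apply] using this.symm
  · exfalso
    have hA : A = (c⁻¹ * d) • (1 : Matrix (Fin 2) (Fin 2) ℂ) := by
      have := congrArg (fun m : Matrix (Fin 2) (Fin 2) ℂ => c⁻¹ • m) h
      simpa [smul_smul, inv_mul_cancel₀ hc] using this
    set s := c⁻¹ * d with hs
    have hdet : s ^ 2 = 1 := by
      have := hd
      rw [hA] at this
      simpa [Matrix.det_smul, sq] using this
    have hfac : (s - 1) * (s + 1) = 0 := by linear_combination hdet
    rcases mul_eq_zero.mp hfac with h' | h'
    · have hs1 : s = 1 := by linear_combination h'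
      rw [hs1, one_smul] at hA
      exact h1 hA
    · have hs1 : s = -1 := by linear_combination h'
      rw [hs1] at hA
      apply h2
      rw [hA]
      simp

lemma trace_constraint (A : Matrix (Fin 2) (Fin 2) ℂ) (hd : A.det = 1)
    (h1 : A ≠ 1) (h2 : A ≠ -1)
    (hk : A^2 = 1 ∨ A^2 = -1 ∨ A^3 = 1 ∨ A^3 = -1 ∨ A^5 = 1 ∨ A^5 = -1) :
    A.trace * (A.trace^2 - 1) * (A.trace^4 - 3*A.trace^2 + 1) = 0 := by
  set z := A.trace with hz
  have hCH : A * A = z • A - 1 := ch2 A hd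
  have hp2 : A^2 = z • A - 1 := by rw [sq]; exact hCH
  have hp3 : A^3 = (z^2 - 1) • A - z • 1 := by
    have e : A^3 = A * A * A := by rw [pow_succ, sq]
    rw [e, hCH, sub_mul, smul_mul_assoc, hCH, one_mul]
    module
  have hp5 : A^5 = (z^4 - 3*z^2 + 1) • A - (z^3 - 2*z) • 1 := by
    have e : A^5 = A^3 * (A * A) := by rw [show (5:ℕ) = 3+2 from rfl, pow_add, sq]
    rw [e, hp3, hCH]
    simp only [sub_mul, mul_sub, smul_mul_assoc, mul_smul_comm, one_mul, mul_one, smul_smul]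
    rw [hCH]
    module
  rcases hk with h | h | h | h | h | h
  · exfalso
    rw [hp2, sub_eq_iff_eq_add] at h
    have key : z • A = (2:ℂ) • (1 : Matrix (Fin 2) (Fin 2) ℂ) := by rw [h]; module
    have := (scalar_aux A hd h1 h2 _ _ key).2
    norm_num at this
  · rw [hp2, sub_eq_iff_eq_add] at h
    have key : z • A = (0:ℂ) • (1 : Matrix (Fin 2) (Fin 2) ℂ) := by rw [h]; module
    have hc0 := (scalar_aux A hd h1 h2 _ _ key).1
    rw [hc0]; ring
  · rw [hp3, sub_eq_iff_eq_add] at h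
    have key : (z^2 - 1) • A = (z + 1) • (1 : Matrix (Fin 2) (Fin 2) ℂ) := by rw [h]; module
    have hc0 := (scalar_aux A hd h1 h2 _ _ key).1
    rw [hc0]; ring
  · rw [hp3, sub_eq_iff_eq_add] at h
    have key : (z^2 - 1) • A = (z - 1) • (1 : Matrix (Fin 2) (Fin 2) ℂ) := by rw [h]; module
    have hc0 := (scalar_aux A hd h1 h2 _ _ key).1
    rw [hc0]; ring
  · rw [hp5, sub_eq_iff_eq_add] at h
    have key : (z^4 - 3*z^2 + 1) • A = (z^3 - 2*z + 1) • (1 : Matrix (Fin 2) (Fin 2) ℂ) := by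
      rw [h]; module
    have hc0 := (scalar_aux A hd h1 h2 _ _ key).1
    rw [hc0]; ring
  · rw [hp5, sub_eq_iff_eq_add] at h
    have key : (z^4 - 3*z^2 + 1) • A = (z^3 - 2*z - 1) • (1 : Matrix (Fin 2) (Fin 2) ℂ) := by
      rw [h]; module
    have hc0 := (scalar_aux A hd h1 h2 _ _ key).1
    rw [hc0]; ring

/-- If the image of `M` in `PSL(2,ℂ)` satisfies `m^k = 1` then `M^k = ±1` as matrices. -/
lemma scalar_neg_one : (Matrix.scalar (Fin 2) (-1:ℂ)) = -1 := by
  rw [show (Matrix.scalar (Fin 2) (-1:ℂ)) = diagonal (fun _ => -(1:ℂ)) from rfl,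
    ← Matrix.diagonal_neg, Matrix.diagonal_one]

lemma pow_pm (M : SpecialLinearGroup (Fin 2) ℂ) (k : ℕ)
    (h : (QuotientGroup.mk M : PSL2C) ^ k = 1) :
    ((M : Matrix (Fin 2) (Fin 2) ℂ))^k = 1 ∨ ((M : Matrix (Fin 2) (Fin 2) ℂ))^k = -1 := by
  rw [← QuotientGroup.mk_pow, QuotientGroup.eq_one_iff] at h
  obtain ⟨r, hr, hs⟩ := Matrix.SpecialLinearGroup.mem_center_iff.mp h
  rw [Fintype.card_fin] at hr
  have hfac : (r - 1) * (r + 1) = 0 := by linear_combination hr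
  have hcoe : ((M ^ k : SpecialLinearGroup (Fin 2) ℂ) : Matrix (Fin 2) (Fin 2) ℂ)
      = ((M : Matrix (Fin 2) (Fin 2) ℂ))^k := Matrix.SpecialLinearGroup.coe_pow M k
  rcases mul_eq_zero.mp hfac with h' | h'
  · left
    have hr1 : r = 1 := by linear_combination h'
    rw [hr1] at hs
    rw [← hcoe, ← hs]
    simp
  · right
    have hr1 : r = -1 := by linear_combination h'
    rw [hr1] at hs
    rw [← hcoe, ← hs]
    exact scalar_neg_one

lemma tr_adj (B : Matrix (Fin 2) (Fin 2) ℂ) : (adjugate B).trace = B.trace := by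
  rw [Matrix.adjugate_fin_two]
  simp [Matrix.trace_fin_two]
  ring

lemma fricke (A B : Matrix (Fin 2) (Fin 2) ℂ) :
    (A * adjugate B).trace = A.trace * B.trace - (A * B).trace := by
  rw [Matrix.adjugate_fin_two]
  simp [Matrix.trace_fin_two, Matrix.mul_apply, Fin.sum_univ_two]
  ring

lemma pos_helper (t : ℝ) (ht : 2 < t) : t * (t^2 - 1) * (t^4 - 3*t^2 + 1) ≠ 0 := by
  have h1 : 0 < t := by linarith
  have h2 : 0 < t^2 - 1 := by nlinarith
  have h3 : 0 < t^4 - 3*t^2 + 1 := by nlinarith [sq_nonneg (t^2 - 2), mul_pos h1 h1, sq_nonneg (t-2)]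
  positivity

/-- If `X, Y ∈ SL(2,ℂ)` have traces `1` and `(1+√5)/2`, and the subgroup of `PSL(2,ℂ)`
generated by their images is isomorphic to `A₅`, then
`tr(XY) ∈ {0, 1, (1+√5)/2, (−1+√5)/2}`. -/
theorem trace_mul_mem_of_A5
    (X Y : SpecialLinearGroup (Fin 2) ℂ)
    (hX : Matrix.trace (X : Matrix (Fin 2) (Fin 2) ℂ) = 1)
    (hY : Matrix.trace (Y : Matrix (Fin 2) (Fin 2) ℂ) = (1 + (Real.sqrt 5 : ℂ)) / 2)
    (hA5 : Nonempty
      ((Subgroup.closure ({QuotientGroup.mk X, QuotientGroup.mk Y} : Set PSL2C)) ≃*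
        alternatingGroup (Fin 5))) :
    Matrix.trace ((X * Y : SpecialLinearGroup (Fin 2) ℂ) : Matrix (Fin 2) (Fin 2) ℂ) ∈
      ({0, 1, (1 + (Real.sqrt 5 : ℂ)) / 2, (-1 + (Real.sqrt 5 : ℂ)) / 2} : Set ℂ) := by
  obtain ⟨e⟩ := hA5
  have hc2 : (Real.sqrt 5 : ℂ)^2 = 5 := by
    norm_cast
    rw [Real.sq_sqrt] <;> norm_num
  -- closure membership
  have hmX : (QuotientGroup.mk X : PSL2C) ∈
      Subgroup.closure ({QuotientGroup.mk X, QuotientGroup.mk Y} : Set PSL2C) :=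
    Subgroup.subset_closure (by simp)
  have hmY : (QuotientGroup.mk Y : PSL2C) ∈
      Subgroup.closure ({QuotientGroup.mk X, QuotientGroup.mk Y} : Set PSL2C) :=
    Subgroup.subset_closure (by simp)
  have hmXY : (QuotientGroup.mk (X * Y) : PSL2C) ∈
      Subgroup.closure ({QuotientGroup.mk X, QuotientGroup.mk Y} : Set PSL2C) := by
    rw [QuotientGroup.mk_mul]
    exact mul_mem hmX hmY
  have hmXY' : (QuotientGroup.mk (X * Y⁻¹) : PSL2C) ∈
      Subgroup.closure ({QuotientGroup.mk X, QuotientGroup.mk Y} : Set PSL2C) := by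
    rw [QuotientGroup.mk_mul, QuotientGroup.mk_inv]
    exact mul_mem hmX (inv_mem hmY)
  -- the key six-way disjunction
  have key : ∀ M : SpecialLinearGroup (Fin 2) ℂ,
      ∀ hm : (QuotientGroup.mk M : PSL2C) ∈
        Subgroup.closure ({QuotientGroup.mk X, QuotientGroup.mk Y} : Set PSL2C),
      ((M : Matrix (Fin 2) (Fin 2) ℂ))^2 = 1 ∨ ((M : Matrix (Fin 2) (Fin 2) ℂ))^2 = -1 ∨
      ((M : Matrix (Fin 2) (Fin 2) ℂ))^3 = 1 ∨ ((M : Matrix (Fin 2) (Fin 2) ℂ))^3 = -1 ∨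
      ((M : Matrix (Fin 2) (Fin 2) ℂ))^5 = 1 ∨ ((M : Matrix (Fin 2) (Fin 2) ℂ))^5 = -1 := by
    intro M hm
    have lift : ∀ k : ℕ, (e ⟨_, hm⟩)^k = 1 → (QuotientGroup.mk M : PSL2C)^k = 1 := by
      intro k hk
      have h1 : (⟨QuotientGroup.mk M, hm⟩ :
          Subgroup.closure ({QuotientGroup.mk X, QuotientGroup.mk Y} : Set PSL2C))^k = 1 := by
        apply e.injective
        rw [map_pow, _root_.map_one]
        exact hk
      have := congrArg Subtype.val h1
      simpa using this
    rcases a5_orders (e ⟨_, hm⟩) with h | h | h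
    · rcases pow_pm M 2 (lift 2 h) with h' | h'
      · exact Or.inl h'
      · exact Or.inr (Or.inl h')
    · rcases pow_pm M 3 (lift 3 h) with h' | h'
      · exact Or.inr (Or.inr (Or.inl h'))
      · exact Or.inr (Or.inr (Or.inr (Or.inl h')))
    · rcases pow_pm M 5 (lift 5 h) with h' | h'
      · exact Or.inr (Or.inr (Or.inr (Or.inr (Or.inl h'))))
      · exact Or.inr (Or.inr (Or.inr (Or.inr (Or.inr h'))))
  -- XY is not ±1
  have hd1 : ((X * Y : SpecialLinearGroup (Fin 2) ℂ) : Matrix (Fin 2) (Fin 2) ℂ) ≠ 1 := by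
    intro h
    rw [Matrix.SpecialLinearGroup.coe_mul] at h
    have hYm := congrArg (fun m => adjugate (X : Matrix (Fin 2) (Fin 2) ℂ) * m) h
    simp only [← mul_assoc, Matrix.adjugate_mul, X.prop, one_smul, one_mul, mul_one] at hYm
    rw [hYm] at hY
    rw [tr_adj, hX] at hY
    have hcv : (Real.sqrt 5 : ℂ) = 1 := by linear_combination -2*hY
    rw [hcv] at hc2
    norm_num at hc2
  have hd2 : ((X * Y : SpecialLinearGroup (Fin 2) ℂ) : Matrix (Fin 2) (Fin 2) ℂ) ≠ -1 := by
    intro h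
    rw [Matrix.SpecialLinearGroup.coe_mul] at h
    have hYm := congrArg (fun m => adjugate (X : Matrix (Fin 2) (Fin 2) ℂ) * m) h
    simp only [← mul_assoc, Matrix.adjugate_mul, X.prop, one_smul, one_mul, mul_one,
      mul_neg] at hYm
    rw [hYm] at hY
    rw [Matrix.trace_neg, tr_adj, hX] at hY
    have hcv : (Real.sqrt 5 : ℂ) = -3 := by linear_combination -2*hY
    rw [hcv] at hc2
    norm_num at hc2
  -- XY⁻¹ is not ±1
  have hd1' : ((X * Y⁻¹ : SpecialLinearGroup (Fin 2) ℂ) : Matrix (Fin 2) (Fin 2) ℂ) ≠ 1 := by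
    intro h
    rw [Matrix.SpecialLinearGroup.coe_mul, Matrix.SpecialLinearGroup.coe_inv] at h
    have hXm := congrArg (fun m => m * (Y : Matrix (Fin 2) (Fin 2) ℂ)) h
    simp only [mul_assoc, Matrix.adjugate_mul, Y.prop, one_smul, one_mul, mul_one] at hXm
    rw [← hXm] at hY
    rw [hX] at hY
    have hcv : (Real.sqrt 5 : ℂ) = 1 := by linear_combination -2*hY
    rw [hcv] at hc2
    norm_num at hc2
  have hd2' : ((X * Y⁻¹ : SpecialLinearGroup (Fin 2) ℂ) : Matrix (Fin 2) (Fin 2) ℂ) ≠ -1 := by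
    intro h
    rw [Matrix.SpecialLinearGroup.coe_mul, Matrix.SpecialLinearGroup.coe_inv] at h
    have hXm := congrArg (fun m => m * (Y : Matrix (Fin 2) (Fin 2) ℂ)) h
    simp only [mul_assoc, Matrix.adjugate_mul, Y.prop, one_smul, one_mul, mul_one,
      neg_mul] at hXm
    have hY2 : Matrix.trace ((X : Matrix (Fin 2) (Fin 2) ℂ)) =
        Matrix.trace (-(Y : Matrix (Fin 2) (Fin 2) ℂ)) := by rw [← hXm]
    rw [hX, Matrix.trace_neg, hY] at hY2
    have hcv : (Real.sqrt 5 : ℂ) = -3 := by linear_combination 2*hY2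
    rw [hcv] at hc2
    norm_num at hc2
  -- trace polynomial constraints
  have hPz := trace_constraint _ (X*Y).prop hd1 hd2 (key _ hmXY)
  have hPw := trace_constraint _ (X*Y⁻¹).prop hd1' hd2' (key _ hmXY')
  -- Fricke identity
  have hw : Matrix.trace ((X * Y⁻¹ : SpecialLinearGroup (Fin 2) ℂ) : Matrix (Fin 2) (Fin 2) ℂ) =
      (1 + (Real.sqrt 5 : ℂ))/2 -
        Matrix.trace ((X * Y : SpecialLinearGroup (Fin 2) ℂ) : Matrix (Fin 2) (Fin 2) ℂ) := by
    rw [Matrix.SpecialLinearGroup.coe_mul, Matrix.SpecialLinearGroup.coe_inv, fricke, hX, hY,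
      Matrix.SpecialLinearGroup.coe_mul]
    ring
  set z := Matrix.trace ((X * Y : SpecialLinearGroup (Fin 2) ℂ) : Matrix (Fin 2) (Fin 2) ℂ)
    with hzdef
  rw [hw] at hPw
  simp only [Set.mem_insert_iff, Set.mem_singleton_iff]
  -- helper to kill bad cases
  have hr2 : (Real.sqrt 5)^2 = 5 := Real.sq_sqrt (by norm_num)
  have hr0 : (0:ℝ) ≤ Real.sqrt 5 := Real.sqrt_nonneg 5
  have bad : ∀ t : ℝ, 2 < t →
      ((1 + (Real.sqrt 5 : ℂ))/2 - z) = (t : ℂ) → False := by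
    intro t ht hzv
    rw [hzv] at hPw
    have : t * (t^2 - 1) * (t^4 - 3*t^2 + 1) = 0 := by exact_mod_cast hPw
    exact pos_helper t ht this
  rcases mul_eq_zero.mp hPz with h0 | h0
  · rcases mul_eq_zero.mp h0 with h0 | h0
    · exact Or.inl h0
    · have hfac : (z - 1) * (z + 1) = 0 := by linear_combination h0
      rcases mul_eq_zero.mp hfac with h1 | h1
      · exact Or.inr (Or.inl (by linear_combination h1))
      · exfalso
        have hzv : z = -1 := by linear_combination h1
        refine bad ((3 + Real.sqrt 5)/2) (by nlinarith) ?_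
        rw [hzv]
        push_cast
        ring
  · have hq : (z^2 - z - 1) * (z^2 + z - 1) = 0 := by linear_combination h0
    rcases mul_eq_zero.mp hq with hq1 | hq1
    · have hfac : (z - (1 + (Real.sqrt 5 : ℂ))/2) * (z - (1 - (Real.sqrt 5 : ℂ))/2) = 0 := by
        linear_combination hq1 + (-1/4 : ℂ) * hc2
      rcases mul_eq_zero.mp hfac with h1 | h1
      · exact Or.inr (Or.inr (Or.inl (by linear_combination h1)))
      · exfalso
        have hzv : z = (1 - (Real.sqrt 5 : ℂ))/2 := by linear_combination h1
        refine bad (Real.sqrt 5) (by nlinarith) ?_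
        rw [hzv]
        push_cast
        ring
    · have hfac : (z - (-1 + (Real.sqrt 5 : ℂ))/2) * (z - (-1 - (Real.sqrt 5 : ℂ))/2) = 0 := by
        linear_combination hq1 + (-1/4 : ℂ) * hc2
      rcases mul_eq_zero.mp hfac with h1 | h1
      · exact Or.inr (Or.inr (Or.inr (by linear_combination h1)))
      · exfalso
        have hzv : z = (-1 - (Real.sqrt 5 : ℂ))/2 := by linear_combination h1
        refine bad (1 + Real.sqrt 5) (by nlinarith) ?_
        rw [hzv]
        push_cast
        ring
end
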